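/- arXiv:2509.22297 — 2 statements merged into one kernel-verified Lean document; each statement's English description precedes it below -/
import Mathlib

section
/- In the binary deterministic model Y = g(U, X) with g(0,x)=x, g(1,x)=1−x, g(2,x)=0, g(3,x)=1, and with constraints P(U=0)+P(U=3) = p and P(U=1)+P(U=3) = q for 0 < p < q < 1: choosing P(U=3)=0, P(U=0)=p, P(U=1)=q gives counterfactual probability P*(Y*=0 | Y=1, X=1, X*=0) = 1, while choosing P(U=3)=p, P(U=0)=0, P(U=1)=q−p gives P*(Y*=0 | Y=1, X=1, X*=0) = 0. Hence the counterfactual probability is not identified by the observational conditionals alone. -/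
/-- The canonical structural equation for the binary model `X → Y` with a four-valued
exogenous `U`: `Y = X` if `U = 0`, `Y = ¬X` if `U = 1`, `Y = 0` if `U = 2`,
`Y = 1` if `U = 3` (Booleans encode values: `true = 1`, `false = 0`). -/
def gEq (u : Fin 4) (x : Bool) : Bool := ![x, !x, false, true] u

/-- The induced observational conditional `P(Y = 1 | X = x)`. -/
def obsY (P : Fin 4 → ℝ) (x : Bool) : ℝ := ∑ u, if gEq u x = true then P u else 0

/-- The counterfactual probability `P*(Y* = 0 | Y = 1, X = 1, X* = 0)`:
the posterior over `U` given the factual observation `(X = 1, Y = 1)`, pushed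
forward through `gEq` at the counterfactual input `X* = 0`. -/
noncomputable def cfY (P : Fin 4 → ℝ) : ℝ :=
  (∑ u, if gEq u false = false ∧ gEq u true = true then P u else 0)
    / (∑ u, if gEq u true = true then P u else 0)

/-- With the constraints `P(U=0)+P(U=3) = p`, `P(U=1)+P(U=3) = q` for
`0 < p < q < 1` (and `p + q ≤ 1` so that the first choice is a distribution):
the choice `P(U=3)=0, P(U=0)=p, P(U=1)=q` gives `P*(Y*=0 | Y=1, X=1, X*=0) = 1`,
while the choice `P(U=3)=p, P(U=0)=0, P(U=1)=q−p` gives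
`P*(Y*=0 | Y=1, X=1, X*=0) = 0`; both are probability distributions inducing the
same observational conditionals, so the counterfactual probability is not
identified by the observational conditionals alone. -/
theorem stmt6 (p q : ℝ) (hp : 0 < p) (hpq : p < q) (hq : q < 1) (hsum : p + q ≤ 1)
    (P₁ P₂ : Fin 4 → ℝ)
    (hP₁ : P₁ = ![p, q, 1 - p - q, 0])
    (hP₂ : P₂ = ![0, q - p, 1 - q, p]) :
    (∀ u, 0 ≤ P₁ u) ∧ (∑ u, P₁ u = 1) ∧
    (∀ u, 0 ≤ P₂ u) ∧ (∑ u, P₂ u = 1) ∧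
    obsY P₁ true = p ∧ obsY P₁ false = q ∧
    obsY P₂ true = p ∧ obsY P₂ false = q ∧
    cfY P₁ = 1 ∧ cfY P₂ = 0 := by
  subst hP₁ hP₂
  refine ⟨?_, ?_, ?_, ?_, ?_, ?_, ?_, ?_, ?_, ?_⟩
  · intro u; fin_cases u <;> simp <;> linarith
  · simp [Fin.sum_univ_four]
  · intro u; fin_cases u <;> simp <;> linarith
  · simp [Fin.sum_univ_four]
  · simp [obsY, gEq, Fin.sum_univ_four]
  · simp [obsY, gEq, Fin.sum_univ_four]
  · simp [obsY, gEq, Fin.sum_univ_four]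
  · simp [obsY, gEq, Fin.sum_univ_four]
  · simp [cfY, gEq, Fin.sum_univ_four]
    exact hp.ne'
  · simp [cfY, gEq, Fin.sum_univ_four]
end

section
/- Observational equivalence does not determine counterfactuals in deterministic models: there exist two deterministic causal models M₁ and M₂ over the same endogenous variables X, Y (binary, graph X → Y) with identical observational conditionals P(Y | X), but with P*_{M₁}(Y*=0 | Y=1, X=1, X*=0) = 1 and P*_{M₂}(Y*=0 | Y=1, X=1, X*=0) = 0. -/
/-- Observational equivalence does not determine counterfactuals in
deterministic models: there exist two deterministic causal models over the binary
variables `X → Y` (given by two exogenous distributions `P₁`, `P₂` for the structural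
equation `gEq`) with identical observational conditionals `P(Y | X)` -- namely
`P(Y=1|X=1) = p`, `P(Y=1|X=0) = q` -- but with
`P*(Y*=0 | Y=1, X=1, X*=0) = 1` in the first and `= 0` in the second. -/
theorem stmt16 (p q : ℝ) (hp : 0 < p) (hpq : p < q) (hq : q < 1) (hsum : p + q ≤ 1) :
    ∃ P₁ P₂ : Fin 4 → ℝ,
      (∀ u, 0 ≤ P₁ u) ∧ (∑ u, P₁ u = 1) ∧
      (∀ u, 0 ≤ P₂ u) ∧ (∑ u, P₂ u = 1) ∧
      (∀ x : Bool, obsY P₁ x = obsY P₂ x) ∧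
      obsY P₁ true = p ∧ obsY P₁ false = q ∧
      cfY P₁ = 1 ∧ cfY P₂ = 0 := by
  refine ⟨![p, q, 1 - p - q, 0], ![0, q - p, 1 - q, p], ?_, ?_, ?_, ?_, ?_, ?_, ?_, ?_, ?_⟩
  · intro u; fin_cases u <;> simp <;> linarith
  · simp [Fin.sum_univ_four]
  · intro u; fin_cases u <;> simp <;> linarith
  · simp [Fin.sum_univ_four]
  · intro x; cases x <;> simp [obsY, gEq, Fin.sum_univ_four]
  · simp [obsY, gEq, Fin.sum_univ_four]
  · simp [obsY, gEq, Fin.sum_univ_four]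
  · simp [cfY, gEq, Fin.sum_univ_four]
    exact hp.ne'
  · simp [cfY, gEq, Fin.sum_univ_four]
end
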